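/- (Algebraic content of Lemma 3.4 of the paper.) Let n ≥ 1 and let a, a' ∈ O_L with ϖ ∣ a, ϖ ∣ a' and a ≡ a' (mod ϖ^n·O_L). Let (F_m)_{m≥0} and (F'_m)_{m≥0} be sequences in Λ that are norm-compatible for a and for a' respectively, and suppose F_m ≡ F'_m (mod (ϖ^n, ω_m)·Λ) for every m ≥ 0. Let (F^♯, F^♭) and (F'^♯, F'^♭) be the unique pairs attached to these sequences by Theorem 3.3 (so that H_m·(F^♯, F^♭)ᵀ ≡ (F_m, −Φ_m·F_{m−1})ᵀ mod ω_m·Λ, and likewise for the primed data with the matrices built from a'). Then F^♯ ≡ F'^♯ and F^♭ ≡ F'^♭ (mod ϖ^n·Λ). -/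

import Mathlib

open PowerSeries

/-- `ω_m = (1+X)^{p^m} − 1`. -/
noncomputable def omegaPS (p : ℕ) (R : Type*) [CommRing R] (m : ℕ) : PowerSeries R :=
  (1 + PowerSeries.X) ^ (p ^ m) - 1

/-- `Φ_m = Σ_{i<p} (1+X)^{i·p^{m−1}}` (meaningful for `m ≥ 1`). -/
noncomputable def PhiPS (p : ℕ) (R : Type*) [CommRing R] (m : ℕ) : PowerSeries R :=
  ∑ i ∈ Finset.range p, (1 + PowerSeries.X) ^ (i * p ^ (m - 1))

/-- The matrix `C_j = ((a, 1), (−Φ_j, 0))`. -/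
noncomputable def Cmat (p : ℕ) (R : Type*) [CommRing R] (a : R) (j : ℕ) :
    Matrix (Fin 2) (Fin 2) (PowerSeries R) :=
  !![PowerSeries.C (R := R) a, 1; -(PhiPS p R j), 0]

/-- `H_m = C_m · C_{m−1} ⋯ C_1` (with `H_0 = 1`). -/
noncomputable def Hmat (p : ℕ) (R : Type*) [CommRing R] (a : R) :
    ℕ → Matrix (Fin 2) (Fin 2) (PowerSeries R)
  | 0 => 1
  | m + 1 => Cmat p R a (m + 1) * Hmat p R a m

/-- A sequence `(F_m)_{m≥0}` in `Λ` is norm-compatible for `a` if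
`F_{m+1} ≡ a·F_m − Φ_m·F_{m−1} (mod ω_m·Λ)` for every `m ≥ 1`. -/
def NormCompat (p : ℕ) (R : Type*) [CommRing R] (a : R) (F : ℕ → PowerSeries R) : Prop :=
  ∀ m : ℕ, 1 ≤ m →
    omegaPS p R m ∣ (F (m + 1) - (PowerSeries.C (R := R) a * F m - PhiPS p R m * F (m - 1)))

/-!
Subtracting the two systems of congruences and using `H_m(a) ≡ H_m(a') (mod ϖⁿ)`, the
differences `w = (F^♯ - F'^♯, F^♭ - F'^♭)` satisfy `(H_m w)₀ ∈ (ϖⁿ, ω_m)` for all `m ≥ 1`.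
Modulo `ϖ` the coefficient ring has characteristic `p` and `a ≡ 0`, so `ω_m ≡ X^{p^m}`,
`Φ_{m+1} ≡ X^{p^{m+1} - p^m}`, and `C_{m+2} C_{m+1}` is diagonal: the first row of `H_m` reduces
to `(±X^c, 0)` for even `m` and to `(0, ±X^c)` for odd `m`, where `c + ⌊m/2⌋ ≤ p^m`. Hence
both reduced differences are divisible by every power of `X`, i.e. `ϖ ∣ w`. Since `ω_m` stays a
non-zero-divisor modulo `ϖ`, the relation can be divided by `ϖ`, and induction on `n` concludes.
-/

section

variable {R S : Type*} [CommRing R] [CommRing S] (p : ℕ)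

lemma PhiPS_succ_mul_omegaPS (m : ℕ) :
    PhiPS p R (m + 1) * omegaPS p R m = omegaPS p R (m + 1) := by
  simp only [PhiPS, omegaPS, Nat.add_sub_cancel, mul_comm _ (p ^ m), pow_mul]
  rw [geom_sum_mul, ← pow_mul, ← pow_succ]

lemma map_omegaPS (f : R →+* S) (m : ℕ) : map f (omegaPS p R m) = omegaPS p S m := by
  simp [omegaPS]

lemma map_PhiPS (f : R →+* S) (m : ℕ) : map f (PhiPS p R m) = PhiPS p S m := by
  simp [PhiPS]

lemma map_Hmat (f : R →+* S) (a : R) (m : ℕ) :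
    (Hmat p R a m).map (map f) = Hmat p S (f a) m := by
  induction m with
  | zero => simp [Hmat]
  | succ m ih =>
    rw [Hmat, Hmat, Matrix.map_mul, ih]
    congr 1
    ext i j
    fin_cases i <;> fin_cases j <;> simp [Cmat, map_PhiPS]

lemma map_Hmat_apply (f : R →+* S) (a : R) (m : ℕ) (i j : Fin 2) :
    map f (Hmat p R a m i j) = Hmat p S (f a) m i j := by
  rw [← map_Hmat]
  rfl

lemma Hmat_add_two_zero_apply (a : R) (m : ℕ) (j : Fin 2) :
    Hmat p R a (m + 2) 0 j
      = C a * Hmat p R a (m + 1) 0 j - PhiPS p R (m + 1) * Hmat p R a m 0 j := by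
  simp only [Hmat, Cmat, Matrix.mul_apply, Fin.sum_univ_two, Matrix.of_apply, Matrix.cons_val',
    Matrix.cons_val_zero, Matrix.cons_val_one, Matrix.cons_val_fin_one]
  ring

end

lemma C_dvd_iff_map_mk_eq_zero {R : Type*} [CommRing R] (r : R) (g : R⟦X⟧) :
    C r ∣ g ↔ map (Ideal.Quotient.mk (Ideal.span {r})) g = 0 := by
  simp only [PowerSeries.ext_iff, coeff_map, map_zero, Ideal.Quotient.eq_zero_iff_dvd]
  refine ⟨fun ⟨h, hg⟩ i => ⟨coeff i h, by rw [hg, coeff_C_mul]⟩, fun h => ?_⟩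
  choose c hc using h
  exact ⟨mk c, by ext i; rw [coeff_C_mul, coeff_mk, hc]⟩

lemma C_dvd_Hmat_sub {R : Type*} [CommRing R] (p : ℕ) {r a a' : R} (h : r ∣ a - a') (m : ℕ)
    (i j : Fin 2) : C r ∣ Hmat p R a m i j - Hmat p R a' m i j := by
  have hmk : Ideal.Quotient.mk (Ideal.span {r}) a = Ideal.Quotient.mk _ a' :=
    Ideal.Quotient.eq.2 (Ideal.mem_span_singleton.2 h)
  rw [C_dvd_iff_map_mk_eq_zero, map_sub, map_Hmat_apply, map_Hmat_apply, hmk, sub_self]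

section CharP

variable {p : ℕ} [Fact p.Prime] {K : Type*} [CommRing K] [CharP K p]

lemma omegaPS_eq_X_pow (m : ℕ) : omegaPS p K m = X ^ p ^ m := by
  have : CharP K⟦X⟧ p := charP_of_injective_ringHom C_injective p
  rw [omegaPS, add_comm, add_pow_char_pow, one_pow, add_sub_cancel_right]

lemma PhiPS_succ_eq_X_pow (m : ℕ) : PhiPS p K (m + 1) = X ^ (p ^ (m + 1) - p ^ m) := by
  apply X_pow_mul_cancel (k := p ^ m)
  rw [← pow_add, Nat.add_sub_cancel' (Nat.pow_le_pow_right (Fact.out : p.Prime).pos m.le_succ),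
    ← omegaPS_eq_X_pow m, ← omegaPS_eq_X_pow (m + 1), mul_comm, PhiPS_succ_mul_omegaPS]

lemma Hmat_zero_add_two_zero_apply (m : ℕ) (j : Fin 2) :
    Hmat p K 0 (m + 2) 0 j = -(X ^ (p ^ (m + 1) - p ^ m) * Hmat p K 0 m 0 j) := by
  rw [Hmat_add_two_zero_apply, PhiPS_succ_eq_X_pow, map_zero, zero_mul, zero_sub]

end CharP

section XAdic

variable {R : Type*} [CommRing R]

lemma eq_zero_of_forall_X_pow_dvd {f : R⟦X⟧} (h : ∀ j, X ^ j ∣ f) : f = 0 := by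
  ext i
  exact X_pow_dvd_iff.1 (h (i + 1)) i i.lt_succ_self

lemma X_pow_dvd_of_X_pow_dvd_mul {N c j : ℕ} (hcj : c + j ≤ N) {f : R⟦X⟧}
    (h : X ^ N ∣ X ^ c * f) : X ^ j ∣ f := by
  have hX : IsLeftRegular (X ^ c : R⟦X⟧) := X_pow_mul_injective
  rw [← hX.dvd_cancel_left, ← pow_add]
  exact (pow_dvd_pow X hcj).trans h

variable {p : ℕ} {s : ℕ → R⟦X⟧}

lemma exists_eq_neg_one_pow_mul_X_pow_of_recurrence (hp : 2 ≤ p)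
    (hs : ∀ m, s (m + 2) = -(X ^ (p ^ (m + 1) - p ^ m) * s m)) {k : ℕ} (hk : s k = 1)
    (j : ℕ) : ∃ c, c + j ≤ p ^ (k + 2 * j) ∧ s (k + 2 * j) = (-1) ^ j * X ^ c := by
  induction j with
  | zero => exact ⟨0, by simp, by simpa using hk⟩
  | succ j ih =>
    obtain ⟨c, hc, hsc⟩ := ih
    refine ⟨c + (p ^ (k + 2 * j + 1) - p ^ (k + 2 * j)), ?_, ?_⟩
    · have h1 : p ^ (k + 2 * j) ≤ p ^ (k + 2 * j + 1) :=
        Nat.pow_le_pow_right (by omega) (by omega)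
      have h2 : 2 * p ^ (k + 2 * j + 1) ≤ p ^ (k + 2 * (j + 1)) := by
        rw [show k + 2 * (j + 1) = k + 2 * j + 1 + 1 by ring, pow_succ, mul_comm]
        exact Nat.mul_le_mul_left _ hp
      have h3 : 1 ≤ p ^ (k + 2 * j + 1) := Nat.one_le_pow _ _ (by omega)
      omega
    · rw [show k + 2 * (j + 1) = k + 2 * j + 2 by ring, hs, hsc, pow_add, pow_succ]
      ring

lemma X_pow_dvd_of_recurrence (hp : 2 ≤ p)
    (hs : ∀ m, s (m + 2) = -(X ^ (p ^ (m + 1) - p ^ m) * s m)) {k : ℕ} (hk : s k = 1) (j : ℕ)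
    {f : R⟦X⟧} (h : X ^ p ^ (k + 2 * j) ∣ s (k + 2 * j) * f) : X ^ j ∣ f := by
  obtain ⟨c, hc, hsc⟩ := exists_eq_neg_one_pow_mul_X_pow_of_recurrence hp hs hk j
  rw [hsc, mul_assoc, (isUnit_neg_one.pow j).dvd_mul_left] at h
  exact X_pow_dvd_of_X_pow_dvd_mul hc h

lemma eq_zero_of_recurrence (hs : ∀ m, s (m + 2) = -(X ^ (p ^ (m + 1) - p ^ m) * s m))
    {k : ℕ} (hk : s k = 0) (j : ℕ) : s (k + 2 * j) = 0 := by
  induction j with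
  | zero => exact hk
  | succ j ih => rw [show k + 2 * (j + 1) = k + 2 * j + 2 by ring, hs, ih, mul_zero, neg_zero]

end XAdic

lemma eq_zero_of_forall_X_pow_dvd_Hmat {p : ℕ} [Fact p.Prime] {K : Type*} [CommRing K]
    [CharP K p] {u v : K⟦X⟧}
    (h : ∀ m, 1 ≤ m → X ^ p ^ m ∣ Hmat p K 0 m 0 0 * u + Hmat p K 0 m 0 1 * v) :
    u = 0 ∧ v = 0 := by
  have hp : 2 ≤ p := (Fact.out : p.Prime).two_le
  have hs (j : Fin 2) (m : ℕ) := Hmat_zero_add_two_zero_apply (p := p) (K := K) m j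
  have h00 : Hmat p K 0 0 0 0 = 1 := by simp [Hmat]
  have h01 : Hmat p K 0 0 0 1 = 0 := by simp [Hmat]
  have h10 : Hmat p K 0 1 0 0 = 0 := by simp [Hmat, Cmat]
  have h11 : Hmat p K 0 1 0 1 = 1 := by simp [Hmat, Cmat]
  constructor
  · refine eq_zero_of_forall_X_pow_dvd fun j => ?_
    rcases j with _ | j
    · simp
    refine X_pow_dvd_of_recurrence (s := fun m => Hmat p K 0 m 0 0) hp (hs 0) h00 (j + 1) ?_
    have hz : Hmat p K 0 (0 + 2 * (j + 1)) 0 1 = 0 :=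
      eq_zero_of_recurrence (s := fun m => Hmat p K 0 m 0 1) (hs 1) h01 (j + 1)
    simpa only [hz, zero_mul, add_zero] using h (0 + 2 * (j + 1)) (by omega)
  · refine eq_zero_of_forall_X_pow_dvd fun j => ?_
    refine X_pow_dvd_of_recurrence (s := fun m => Hmat p K 0 m 0 1) hp (hs 1) h11 j ?_
    have hz : Hmat p K 0 (1 + 2 * j) 0 0 = 0 :=
      eq_zero_of_recurrence (s := fun m => Hmat p K 0 m 0 0) (hs 0) h10 j
    simpa only [hz, zero_mul, zero_add] using h (1 + 2 * j) (by omega)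

section Quotient

variable {R : Type*} [CommRing R] {p : ℕ} {ϖ : R}

lemma charP_quotient_span_singleton (hp : p.Prime) (hϖ : ¬IsUnit ϖ) (hpϖ : ϖ ∣ p) :
    CharP (R ⧸ Ideal.span {ϖ}) p := by
  have : Nontrivial (R ⧸ Ideal.span {ϖ}) :=
    Ideal.Quotient.nontrivial_iff.2 (mt Ideal.span_singleton_eq_top.1 hϖ)
  rwa [CharP.charP_iff_prime_eq_zero hp, ← map_natCast (Ideal.Quotient.mk _),
    Ideal.Quotient.eq_zero_iff_dvd]

lemma isLeftRegular_map_omegaPS (hp : p.Prime) (hϖ : ¬IsUnit ϖ) (hpϖ : ϖ ∣ p) (m : ℕ) :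
    IsLeftRegular (map (Ideal.Quotient.mk (Ideal.span {ϖ})) (omegaPS p R m)) := by
  have : Fact p.Prime := ⟨hp⟩
  have := charP_quotient_span_singleton hp hϖ hpϖ
  rw [map_omegaPS, omegaPS_eq_X_pow]
  exact X_pow_mul_injective

lemma mem_span_of_C_mul_mem_span [IsDomain R] (hϖ : ϖ ≠ 0) {f x : R⟦X⟧}
    (hf : IsLeftRegular (map (Ideal.Quotient.mk (Ideal.span {ϖ})) f)) {n : ℕ}
    (hx : C ϖ * x ∈ Ideal.span {C (ϖ ^ (n + 1)), f}) : x ∈ Ideal.span {C (ϖ ^ n), f} := by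
  obtain ⟨g, h, hgh⟩ := Ideal.mem_span_pair.1 hx
  obtain ⟨h', rfl⟩ : C ϖ ∣ h := by
    rw [C_dvd_iff_map_mk_eq_zero]
    apply hf
    simpa [Ideal.Quotient.mk_singleton_self, mul_comm] using
      congrArg (map (Ideal.Quotient.mk (Ideal.span {ϖ}))) hgh
  have hCϖ : C ϖ ≠ 0 := (map_ne_zero_iff _ C_injective).2 hϖ
  refine Ideal.mem_span_pair.2 ⟨g, h', mul_left_cancel₀ hCϖ ?_⟩
  rw [← hgh, pow_succ', map_mul]
  ring

end Quotient

section Induction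

variable {p : ℕ} {𝕆 : Type*} [CommRing 𝕆] {ϖ : 𝕆} {a : 𝕆}

lemma C_dvd_of_forall_Hmat_mem_span (hp : p.Prime) (hϖ : ¬IsUnit ϖ) (hpϖ : ϖ ∣ (p : 𝕆))
    (ha : ϖ ∣ a) {n : ℕ} {w₀ w₁ : 𝕆⟦X⟧}
    (h : ∀ m, 1 ≤ m → Hmat p 𝕆 a m 0 0 * w₀ + Hmat p 𝕆 a m 0 1 * w₁ ∈
      Ideal.span {C (ϖ ^ (n + 1)), omegaPS p 𝕆 m}) :
    C ϖ ∣ w₀ ∧ C ϖ ∣ w₁ := by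
  have : Fact p.Prime := ⟨hp⟩
  have := charP_quotient_span_singleton hp hϖ hpϖ
  have hπa : Ideal.Quotient.mk (Ideal.span {ϖ}) a = 0 :=
    (Ideal.Quotient.eq_zero_iff_dvd _ _).2 ha
  simp only [C_dvd_iff_map_mk_eq_zero]
  refine eq_zero_of_forall_X_pow_dvd_Hmat fun m hm => ?_
  obtain ⟨g, k, hgk⟩ := Ideal.mem_span_pair.1 (h m hm)
  have := congrArg (map (Ideal.Quotient.mk (Ideal.span {ϖ}))) hgk
  simp only [map_add, map_mul, map_C, map_pow, Ideal.Quotient.mk_singleton_self, map_Hmat_apply,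
    map_omegaPS, omegaPS_eq_X_pow, hπa, map_zero, zero_pow n.succ_ne_zero, mul_zero,
    zero_add] at this
  exact ⟨_, by rw [← this]; ring⟩

lemma C_pow_dvd_of_forall_Hmat_mem_span [IsDomain 𝕆] (hp : p.Prime) (hϖ : Irreducible ϖ)
    (hpϖ : ϖ ∣ (p : 𝕆)) (ha : ϖ ∣ a) (n : ℕ) {w₀ w₁ : 𝕆⟦X⟧}
    (h : ∀ m, 1 ≤ m → Hmat p 𝕆 a m 0 0 * w₀ + Hmat p 𝕆 a m 0 1 * w₁ ∈
      Ideal.span {C (ϖ ^ n), omegaPS p 𝕆 m}) :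
    C ϖ ^ n ∣ w₀ ∧ C ϖ ^ n ∣ w₁ := by
  induction n generalizing w₀ w₁ with
  | zero => simp
  | succ n ih =>
    obtain ⟨⟨u₀, rfl⟩, ⟨u₁, rfl⟩⟩ :=
      C_dvd_of_forall_Hmat_mem_span hp hϖ.not_isUnit hpϖ ha h
    have hu : ∀ m, 1 ≤ m → Hmat p 𝕆 a m 0 0 * u₀ + Hmat p 𝕆 a m 0 1 * u₁ ∈
        Ideal.span {C (ϖ ^ n), omegaPS p 𝕆 m} := fun m hm =>
      mem_span_of_C_mul_mem_span hϖ.ne_zero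
        (isLeftRegular_map_omegaPS hp hϖ.not_isUnit hpϖ m) (by convert h m hm using 1; ring)
    obtain ⟨h₀, h₁⟩ := ih hu
    rw [pow_succ']
    exact ⟨mul_dvd_mul_left _ h₀, mul_dvd_mul_left _ h₁⟩

end Induction

theorem sharp_flat_congruence_general
    (p : ℕ) (hp : p.Prime)
    (𝕆 : Type*) [CommRing 𝕆] [IsDomain 𝕆]
    (ϖ : 𝕆) (hϖ : Irreducible ϖ) (hpϖ : ϖ ∣ (p : 𝕆))
    (n : ℕ)
    (a a' : 𝕆) (ha : ϖ ∣ a) (haa' : ϖ ^ n ∣ (a - a'))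
    (F F' : ℕ → PowerSeries 𝕆)
    (hFF' : ∀ m : ℕ,
      F m - F' m ∈
        Ideal.span ({PowerSeries.C (R := 𝕆) (ϖ ^ n), omegaPS p 𝕆 m} : Set (PowerSeries 𝕆)))
    (Fs Fb Fs' Fb' : PowerSeries 𝕆)
    (hsharp : ∀ m : ℕ, 1 ≤ m → ∀ i : Fin 2,
      omegaPS p 𝕆 m ∣
        ((Hmat p 𝕆 a m).mulVec ![Fs, Fb] i - ![F m, -(PhiPS p 𝕆 m * F (m - 1))] i))
    (hsharp' : ∀ m : ℕ, 1 ≤ m → ∀ i : Fin 2,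
      omegaPS p 𝕆 m ∣
        ((Hmat p 𝕆 a' m).mulVec ![Fs', Fb'] i - ![F' m, -(PhiPS p 𝕆 m * F' (m - 1))] i)) :
    (PowerSeries.C (R := 𝕆) ϖ) ^ n ∣ (Fs - Fs') ∧ (PowerSeries.C (R := 𝕆) ϖ) ^ n ∣ (Fb - Fb') := by
  refine C_pow_dvd_of_forall_Hmat_mem_span hp hϖ hpϖ ha n fun m hm => ?_
  set π := Ideal.Quotient.mk (Ideal.span {C (ϖ ^ n), omegaPS p 𝕆 m})
  have hπ : ∀ {d t}, d ∣ t → d = C (ϖ ^ n) ∨ d = omegaPS p 𝕆 m → π t = 0 :=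
    fun hdt hd => Ideal.Quotient.eq_zero_iff_mem.2 (Ideal.mem_of_dvd _ hdt (Ideal.subset_span hd))
  have e₁ := hπ (hsharp m hm 0) (.inr rfl)
  have e₁' := hπ (hsharp' m hm 0) (.inr rfl)
  have e₂ := hπ (C_dvd_Hmat_sub p haa' m 0 0) (.inl rfl)
  have e₂' := hπ (C_dvd_Hmat_sub p haa' m 0 1) (.inl rfl)
  have e₃ : π (F m - F' m) = 0 := Ideal.Quotient.eq_zero_iff_mem.2 (hFF' m)
  rw [← Ideal.Quotient.eq_zero_iff_mem]
  simp only [Matrix.mulVec, dotProduct, Fin.sum_univ_two, Matrix.cons_val_zero,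
    Matrix.cons_val_one, map_sub, map_add, map_mul] at e₁ e₁' e₂ e₂' e₃ ⊢
  linear_combination e₁ - e₁' - π Fs' * e₂ - π Fb' * e₂' + e₃

/-- algebraic content of Lemma 3.4 of the paper: suppose `ϖ ∣ a`,
`ϖ ∣ a'`, `a ≡ a' (mod ϖⁿ)`, `(F_m)` and `(F'_m)` are norm-compatible for `a` resp.
`a'`, and `F_m ≡ F'_m (mod (ϖⁿ, ω_m)·Λ)` for every `m ≥ 0`.  If `(F^♯, F^♭)` and
`(F'^♯, F'^♭)` are the pairs attached to these data by Theorem 3.3, then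
`F^♯ ≡ F'^♯` and `F^♭ ≡ F'^♭ (mod ϖⁿ·Λ)`. -/
theorem sharp_flat_congruence
    (p : ℕ) (hp : p.Prime) (hp5 : 5 ≤ p)
    (𝕆 : Type*) [CommRing 𝕆] [IsDomain 𝕆] [IsDiscreteValuationRing 𝕆] [CharZero 𝕆]
    (ϖ : 𝕆) (hϖ : Irreducible ϖ) (hpϖ : ϖ ∣ (p : 𝕆))
    (n : ℕ) (hn : 1 ≤ n)
    (a a' : 𝕆) (ha : ϖ ∣ a) (ha' : ϖ ∣ a') (haa' : ϖ ^ n ∣ (a - a'))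
    (F F' : ℕ → PowerSeries 𝕆)
    (hF : NormCompat p 𝕆 a F) (hF' : NormCompat p 𝕆 a' F')
    (hFF' : ∀ m : ℕ,
      F m - F' m ∈
        Ideal.span ({PowerSeries.C (R := 𝕆) (ϖ ^ n), omegaPS p 𝕆 m} : Set (PowerSeries 𝕆)))
    (Fs Fb Fs' Fb' : PowerSeries 𝕆)
    (hsharp : ∀ m : ℕ, 1 ≤ m → ∀ i : Fin 2,
      omegaPS p 𝕆 m ∣
        ((Hmat p 𝕆 a m).mulVec ![Fs, Fb] i - ![F m, -(PhiPS p 𝕆 m * F (m - 1))] i))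
    (hsharp' : ∀ m : ℕ, 1 ≤ m → ∀ i : Fin 2,
      omegaPS p 𝕆 m ∣
        ((Hmat p 𝕆 a' m).mulVec ![Fs', Fb'] i - ![F' m, -(PhiPS p 𝕆 m * F' (m - 1))] i)) :
    (PowerSeries.C (R := 𝕆) ϖ) ^ n ∣ (Fs - Fs') ∧ (PowerSeries.C (R := 𝕆) ϖ) ^ n ∣ (Fb - Fb') :=
  sharp_flat_congruence_general p hp 𝕆 ϖ hϖ hpϖ n a a' ha haa' F F' hFF' Fs Fb Fs' Fb' hsharp
    hsharp'
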